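/- Suppose there is a largest integer l with 2 ≤ l ≤ m such that the linear system Φ_j η = Y_j for j = 1,…,l admits a solution η₀ ∈ ℝ^p, and suppose l < m. Suppose moreover that the stacked matrix Φ_{[l+1]} (obtained by stacking the blocks Φ_1,…,Φ_{l+1}) contains an invertible p×p submatrix. For each r > 0 let ω_r ∈ ℝ^p be a minimizer of ω ↦ ‖Y − Φ(r)ω‖₂ over ℝ^p, and set η_r = r²ω_r. If (r_n) is a sequence of positive reals with r_n → 0 such that η_{r_n} converges to some η ∈ ℝ^p, then η attains the largest order: Φ_j η = Y_j for every j = 1,…,l. -/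

import Mathlib

open Finset

noncomputable section

/-- The Euclidean (ℓ²) norm of a finitely-indexed real vector. -/
def l2norm {ι : Type*} [Fintype ι] (v : ι → ℝ) : ℝ :=
  Real.sqrt (∑ i, v i ^ 2)

/-- Index type for the monomials `x^a y^b` in two variables with `1 ≤ a + b ≤ m`. -/
abbrev MonIdx (m : ℕ) :=
  {ab : Fin (m + 1) × Fin (m + 1) // 1 ≤ (ab.1 : ℕ) + (ab.2 : ℕ) ∧ (ab.1 : ℕ) + (ab.2 : ℕ) ≤ m}

/-- The total degree of a monomial index. -/
def monDeg {m : ℕ} (i : MonIdx m) : ℕ := (i.1.1 : ℕ) + (i.1.2 : ℕ)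

/-- The monomial `x^a y^b` as a function on `ℝ²`. -/
def monomial {m : ℕ} (i : MonIdx m) (v : ℝ × ℝ) : ℝ :=
  v.1 ^ ((i.1.1 : ℕ)) * v.2 ^ ((i.1.2 : ℕ))

/-- The vector `Y`, whose `i`-th entry is `Δφᵢ(0,0)`: it equals `2` exactly when `φᵢ` is
`x²` or `y²`, and `0` otherwise. -/
def Yvec {m : ℕ} (i : MonIdx m) : ℝ :=
  if ((i.1.1 : ℕ) = 2 ∧ (i.1.2 : ℕ) = 0) ∨ ((i.1.1 : ℕ) = 0 ∧ (i.1.2 : ℕ) = 2) then 2 else 0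

/-- The matrix `Φ(r)` with entries `φᵢ(r xₖ)`. -/
def PhiMat {m p : ℕ} (x : Fin p → ℝ × ℝ) (r : ℝ) : Matrix (MonIdx m) (Fin p) ℝ :=
  Matrix.of fun i k => monomial i (r • x k)

/-- Scaling: `Φ(r) w` at row `j` equals `r ^ deg j` times `Φ(1) w` at row `j`. -/
lemma PhiMat_mulVec_eq {m p : ℕ} (x : Fin p → ℝ × ℝ) (r : ℝ) (w : Fin p → ℝ) (j : MonIdx m) :
    (PhiMat x r).mulVec w j = r ^ monDeg j * (PhiMat x 1).mulVec w j := by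
  simp only [Matrix.mulVec, dotProduct, PhiMat, Matrix.of_apply, monomial, monDeg,
    Prod.smul_fst, Prod.smul_snd, smul_eq_mul, one_mul, Finset.mul_sum]
  refine Finset.sum_congr rfl fun k _ => ?_
  rw [mul_pow, mul_pow, pow_add]
  ring

/-- `Y` vanishes off degree 2. -/
lemma Yvec_eq_zero {m : ℕ} (j : MonIdx m) (h : monDeg j ≠ 2) : Yvec j = 0 := by
  unfold Yvec
  rw [if_neg]
  rintro (⟨h1, h2⟩ | ⟨h1, h2⟩) <;> exact h (by simp [monDeg, h1, h2])

/-- A component is dominated by the ℓ² norm. -/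
lemma abs_le_l2norm {ι : Type*} [Fintype ι] (v : ι → ℝ) (i : ι) : |v i| ≤ l2norm v := by
  rw [← Real.sqrt_sq_eq_abs]
  exact Real.sqrt_le_sqrt (Finset.single_le_sum (fun j _ => sq_nonneg (v j)) (mem_univ i))

/-- Componentwise square bounds give an ℓ² norm bound. -/
lemma l2norm_le_of_sq_le {ι : Type*} [Fintype ι] (v u : ι → ℝ) (c : ℝ) (hc : 0 ≤ c)
    (h : ∀ i, v i ^ 2 ≤ c ^ 2 * u i ^ 2) : l2norm v ≤ c * l2norm u := by
  unfold l2norm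
  calc Real.sqrt (∑ i, v i ^ 2) ≤ Real.sqrt (c ^ 2 * ∑ i, u i ^ 2) := by
        refine Real.sqrt_le_sqrt ?_
        rw [mul_sum]
        exact sum_le_sum fun i _ => h i
    _ = c * Real.sqrt (∑ i, u i ^ 2) := by
        rw [Real.sqrt_mul (sq_nonneg c), Real.sqrt_sq hc]

/-- Lemma 3.2 part 2): under the same hypotheses as part 1), if a sequence `rₙ → 0⁺` is such
that `η_{rₙ} = rₙ² ω_{rₙ}` converges to some `η`, then `η` solves the block system up to the
largest order `l`: `Φ_j η = Y_j` for every `j = 1,…,l`. -/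
theorem stmt1 {p m : ℕ} (hm : 2 ≤ m) (x : Fin p → ℝ × ℝ) (l : ℕ)
    (hl2 : 2 ≤ l) (hlm : l < m)
    -- the system up to degree `l` admits a solution `η₀`
    (η₀ : Fin p → ℝ)
    (hsol : ∀ i : MonIdx m, monDeg i ≤ l → (PhiMat x 1).mulVec η₀ i = Yvec i)
    -- `l` is the largest such integer: the system up to degree `l+1` has no solution
    (hmax : ¬ ∃ η : Fin p → ℝ,
      ∀ i : MonIdx m, monDeg i ≤ l + 1 → (PhiMat x 1).mulVec η i = Yvec i)
    -- `Φ_{[l+1]}` contains an invertible `p × p` submatrix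
    (hsub : ∃ rows : Fin p → MonIdx m, (∀ k, monDeg (rows k) ≤ l + 1) ∧
      IsUnit ((PhiMat x 1).submatrix rows id))
    -- for each `r > 0`, `ω r` minimizes `ω ↦ ‖Y − Φ(r) ω‖₂`
    (ω : ℝ → Fin p → ℝ)
    (hmin : ∀ r : ℝ, 0 < r → ∀ w : Fin p → ℝ,
      l2norm (fun i : MonIdx m => Yvec i - (PhiMat x r).mulVec (ω r) i) ≤
        l2norm (fun i : MonIdx m => Yvec i - (PhiMat x r).mulVec w i))
    -- a sequence of positive reals tending to `0` along which `η_r = r² ω_r` converges to `η`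
    (rs : ℕ → ℝ) (hrs : ∀ n, 0 < rs n)
    (hrs0 : Filter.Tendsto rs Filter.atTop (nhds 0))
    (η : Fin p → ℝ)
    (hconv : Filter.Tendsto (fun n => (rs n) ^ 2 • ω (rs n)) Filter.atTop (nhds η)) :
    ∀ i : MonIdx m, monDeg i ≤ l → (PhiMat x 1).mulVec η i = Yvec i := by
  intro i hi
  set A := PhiMat (m := m) x 1 with hA
  set C := l2norm (A.mulVec η₀) with hCdef
  have hC : 0 ≤ C := Real.sqrt_nonneg _
  -- the key pointwise bound
  have key : ∀ n : ℕ, rs n ≤ 1 →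
      |A.mulVec ((rs n) ^ 2 • ω (rs n)) i - Yvec i| ≤ C * rs n := by
    intro n hr1
    set r := rs n with hrdef
    have hr : 0 < r := hrs n
    have hr2 : (0:ℝ) < r ^ 2 := by positivity
    -- residual bound for the candidate (r²)⁻¹ • η₀
    have hb : l2norm (fun j : MonIdx m => Yvec j - (PhiMat x r).mulVec ((r ^ 2)⁻¹ • η₀) j) ≤
        r ^ (l - 1) * C := by
      refine l2norm_le_of_sq_le _ _ _ (by positivity) fun j => ?_
      rw [PhiMat_mulVec_eq, Matrix.mulVec_smul, Pi.smul_apply, smul_eq_mul, ← hA]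
      by_cases hj : monDeg j ≤ l
      · rw [hsol j hj]
        by_cases h2 : monDeg j = 2
        · rw [h2]
          have h0 : Yvec j - r ^ 2 * ((r ^ 2)⁻¹ * Yvec j) = 0 := by
            field_simp
            ring
          rw [h0]
          have h00 : ((0:ℝ)) ^ 2 = 0 := by norm_num
          rw [h00]
          positivity
        · rw [Yvec_eq_zero j h2]
          simp
      · push_neg at hj
        have h3 : monDeg j ≠ 2 := by omega
        rw [Yvec_eq_zero j h3, zero_sub, neg_sq]
        have h4 : r ^ monDeg j = r ^ (monDeg j - 2) * r ^ 2 := by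
          rw [← pow_add]
          congr 1
          omega
        have hX : r ^ monDeg j * ((r ^ 2)⁻¹ * A.mulVec η₀ j) =
            r ^ (monDeg j - 2) * A.mulVec η₀ j := by
          rw [h4, mul_assoc, ← mul_assoc (r ^ 2), mul_inv_cancel₀ hr2.ne', one_mul]
        rw [hX, mul_pow]
        have hle : r ^ (monDeg j - 2) ≤ r ^ (l - 1) :=
          pow_le_pow_of_le_one hr.le hr1 (by omega)
        have hsq : (r ^ (monDeg j - 2)) ^ 2 ≤ (r ^ (l - 1)) ^ 2 :=
          pow_le_pow_left₀ (by positivity) hle 2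
        exact mul_le_mul_of_nonneg_right hsq (sq_nonneg _)
    -- the minimizer's residual is small
    have hres : l2norm (fun j : MonIdx m => Yvec j - (PhiMat x r).mulVec (ω r) j) ≤
        r ^ (l - 1) * C := (hmin r hr _).trans hb
    -- componentwise
    have hcomp : |Yvec i - (PhiMat x r).mulVec (ω r) i| ≤ r ^ (l - 1) * C :=
      (abs_le_l2norm (fun j : MonIdx m => Yvec j - (PhiMat x r).mulVec (ω r) j) i).trans hres
    rw [PhiMat_mulVec_eq, ← hA] at hcomp
    set a := A.mulVec (ω r) i with ha
    set d := monDeg i with hd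
    have hdl : d ≤ l := hi
    have hrd : (0:ℝ) < r ^ d := by positivity
    have hYs : r ^ 2 / r ^ d * Yvec i = Yvec i := by
      by_cases h2 : d = 2
      · rw [h2, div_self (pow_ne_zero 2 hr.ne'), one_mul]
      · rw [Yvec_eq_zero i h2, mul_zero]
    have hscale : r ^ 2 / r ^ d * (Yvec i - r ^ d * a) = Yvec i - r ^ 2 * a := by
      rw [mul_sub, hYs]
      congr 1
      field_simp
    have habs : |A.mulVec (r ^ 2 • ω r) i - Yvec i| = r ^ 2 / r ^ d * |Yvec i - r ^ d * a| := by
      rw [Matrix.mulVec_smul, Pi.smul_apply, smul_eq_mul, ← ha, abs_sub_comm, ← hscale,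
        abs_mul, abs_of_pos (by positivity)]
    rw [habs]
    have hpw : r ^ 2 * r ^ (l - 1) = r ^ (l + 1) := by
      rw [← pow_add]
      congr 1
      omega
    calc r ^ 2 / r ^ d * |Yvec i - r ^ d * a| ≤ r ^ 2 / r ^ d * (r ^ (l - 1) * C) :=
          mul_le_mul_of_nonneg_left hcomp (by positivity)
      _ = r ^ (l + 1) / r ^ d * C := by
          rw [div_mul_eq_mul_div, ← mul_assoc, hpw, mul_div_right_comm]
      _ ≤ r * C := by
          apply mul_le_mul_of_nonneg_right _ hC
          rw [div_le_iff₀ hrd]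
          calc r ^ (l + 1) ≤ r ^ (d + 1) := pow_le_pow_of_le_one hr.le hr1 (by omega)
            _ = r * r ^ d := by ring
      _ = C * r := mul_comm _ _
  -- limits
  have hcont : Continuous fun v : Fin p → ℝ => A.mulVec v i := by
    simp only [Matrix.mulVec, dotProduct]
    exact continuous_finset_sum _ fun k _ => continuous_const.mul (continuous_apply k)
  have h1 : Filter.Tendsto (fun n => A.mulVec ((rs n) ^ 2 • ω (rs n)) i)
      Filter.atTop (nhds (A.mulVec η i)) := (hcont.tendsto η).comp hconv
  have hev : ∀ᶠ n in Filter.atTop, ‖A.mulVec ((rs n) ^ 2 • ω (rs n)) i - Yvec i‖ ≤ C * rs n := by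
    have hlt : ∀ᶠ n in Filter.atTop, rs n < 1 :=
      hrs0.eventually_lt_const (by norm_num)
    filter_upwards [hlt] with n hn
    simpa [Real.norm_eq_abs] using key n hn.le
  have hCr : Filter.Tendsto (fun n => C * rs n) Filter.atTop (nhds 0) := by
    have := hrs0.const_mul C
    simpa using this
  have h2 : Filter.Tendsto (fun n => A.mulVec ((rs n) ^ 2 • ω (rs n)) i - Yvec i)
      Filter.atTop (nhds 0) := squeeze_zero_norm' hev hCr
  have h3 : Filter.Tendsto (fun n => A.mulVec ((rs n) ^ 2 • ω (rs n)) i)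
      Filter.atTop (nhds (Yvec i)) := by
    rw [← tendsto_sub_nhds_zero_iff]
    exact h2
  exact tendsto_nhds_unique h1 h3
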